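/- arXiv:math/0502065 — 3 statements merged into one kernel-verified Lean document; each statement's English description precedes it below -/
import Mathlib

section
/- For planar binary trees T¹ of degree n₁ and T² of degree n₂ with n₁ + n₂ = n, the map (S¹, S²) ↦ S¹\S² is an order isomorphism (in particular a bijection) from the product of upper intervals [T¹, 1̂] × [T², 1̂] in the Tamari posets of degrees n₁ and n₂ onto the interval [T¹\T², 1̂] in the Tamari poset of degree n, where 1̂ denotes the maximal element. -/
/-- Planar binary trees (full binary trees). -/
inductive PBT : Type
  | leaf : PBT
  | node : PBT → PBT → PBT
  deriving DecidableEq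

namespace PBT

/-- Degree: number of internal (trivalent) vertices. -/
def deg : PBT → ℕ
  | leaf => 0
  | node l r => deg l + deg r + 1

/-- `graftL S T = S/T`: graft the root of `S` onto the leftmost leaf of `T`. -/
def graftL (S : PBT) : PBT → PBT
  | leaf => S
  | node l r => node (graftL S l) r

/-- `graftR S T = S\T`: graft the root of `T` onto the rightmost leaf of `S`. -/
def graftR : PBT → PBT → PBT
  | leaf, T => T
  | node l r, T => node l (graftR r T)

/-- The unique tree with one internal vertex. -/
def Y : PBT := node leaf leaf

/-- One right rotation somewhere in the tree: the Tamari covering relation. -/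
inductive rot : PBT → PBT → Prop
  | rotate (A B C : PBT) : rot (node (node A B) C) (node A (node B C))
  | left {S S' : PBT} (T : PBT) : rot S S' → rot (node S T) (node S' T)
  | right (S : PBT) {T T' : PBT} : rot T T' → rot (node S T) (node S T')

/-- The Tamari order: reflexive transitive closure of right rotations. -/
def tamari : PBT → PBT → Prop := Relation.ReflTransGen rot

/-- Left-right reversal. -/
def rev : PBT → PBT
  | leaf => leaf
  | node l r => node (rev r) (rev l)

/-- The left comb of degree `n`. -/
def leftComb : ℕ → PBT
  | 0 => leaf
  | n + 1 => node (leftComb n) leaf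

/-- The right comb of degree `n`. -/
def rightComb : ℕ → PBT
  | 0 => leaf
  | n + 1 => node leaf (rightComb n)

end PBT

/-- Trees of degree `n`. -/
abbrev PBTdeg (n : ℕ) := {T : PBT // T.deg = n}

/-!
A right rotation of `S\T` either takes place inside `T`, or inside `S` with `T` carried along
at the rightmost leaf (a rotation on the right spine of `S` moves the subtree containing `T` as
a whole). Hence every tree above `S\T` is `S'\T'` with `S ≤ S'` and `T ≤ T'`. Since rotations
preserve the degree and `S\T` determines `S` once the degree of `S` is known, the
decomposition is unique, which gives both the bijection and the reflection of the order.
-/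

namespace PBT

lemma rot.deg_eq {S T : PBT} (h : rot S T) : S.deg = T.deg := by
  induction h <;> simp only [deg] <;> omega

lemma tamari.deg_eq {S T : PBT} (h : tamari S T) : S.deg = T.deg := by
  induction h with
  | refl => rfl
  | tail _ h ih => exact ih.trans h.deg_eq

lemma rot_graftR_left {S S' : PBT} (T : PBT) (h : rot S S') :
    rot (graftR S T) (graftR S' T) := by
  induction h with
  | rotate A B C => exact rot.rotate A B (graftR C T)
  | left _ h => exact rot.left _ h
  | right s _ ih => exact rot.right s ih

lemma rot_graftR_right (S : PBT) {T T' : PBT} (h : rot T T') :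
    rot (graftR S T) (graftR S T') := by
  induction S with
  | leaf => exact h
  | node l _ _ ih => exact rot.right l ih

lemma tamari_graftR {S S' T T' : PBT} (hS : tamari S S') (hT : tamari T T') :
    tamari (graftR S T) (graftR S' T') :=
  (hS.lift (graftR · T) fun _ _ => rot_graftR_left T).trans
    (hT.lift (graftR S' ·) fun _ _ => rot_graftR_right S')

lemma exists_of_rot_graftR {S T U : PBT} (h : rot (graftR S T) U) :
    ∃ S' T', U = graftR S' T' ∧ (rot S S' ∧ T' = T ∨ S' = S ∧ rot T T') := by
  induction S generalizing U with
  | leaf => exact ⟨leaf, U, rfl, Or.inr ⟨rfl, h⟩⟩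
  | node l r _ ih =>
    cases h with
    | rotate A B C => exact ⟨node A (node B r), T, rfl, Or.inl ⟨rot.rotate A B r, rfl⟩⟩
    | left _ h => exact ⟨node _ r, T, rfl, Or.inl ⟨rot.left r h, rfl⟩⟩
    | right _ h =>
      obtain ⟨r', T', rfl, ⟨hr, rfl⟩ | ⟨rfl, hT⟩⟩ := ih h
      · exact ⟨node l r', _, rfl, Or.inl ⟨rot.right l hr, rfl⟩⟩
      · exact ⟨node l _, T', rfl, Or.inr ⟨rfl, hT⟩⟩

lemma exists_of_tamari_graftR {S T U : PBT} (h : tamari (graftR S T) U) :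
    ∃ S' T', U = graftR S' T' ∧ tamari S S' ∧ tamari T T' := by
  induction h with
  | refl => exact ⟨S, T, rfl, .refl, .refl⟩
  | tail _ hstep ih =>
    obtain ⟨S', T', rfl, hS, hT⟩ := ih
    obtain ⟨S'', T'', rfl, ⟨hr, rfl⟩ | ⟨rfl, hr⟩⟩ := exists_of_rot_graftR hstep
    exacts [⟨_, _, rfl, hS.tail hr, hT⟩, ⟨_, _, rfl, hS, hT.tail hr⟩]

lemma graftR_inj_of_deg_eq {S S' T T' : PBT} (hd : S.deg = S'.deg)
    (h : graftR S T = graftR S' T') : S = S' ∧ T = T' := by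
  induction S generalizing S' with
  | leaf =>
    cases S' with
    | leaf => exact ⟨rfl, h⟩
    | node => simp [deg] at hd
  | node l r _ ih =>
    cases S' with
    | leaf => simp [deg] at hd
    | node l' r' =>
      simp only [graftR, node.injEq] at h
      obtain ⟨rfl, h⟩ := h
      obtain ⟨rfl, rfl⟩ := ih (by simp only [deg] at hd; omega) h
      exact ⟨rfl, rfl⟩

lemma tamari_graftR_iff {S S' T T' : PBT} (hd : S.deg = S'.deg) :
    tamari (graftR S T) (graftR S' T') ↔ tamari S S' ∧ tamari T T' := by
  refine ⟨fun h => ?_, fun h => tamari_graftR h.1 h.2⟩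
  obtain ⟨S'', T'', hU, hS, hT⟩ := exists_of_tamari_graftR h
  obtain ⟨rfl, rfl⟩ := graftR_inj_of_deg_eq (hS.deg_eq.symm.trans hd) hU.symm
  exact ⟨hS, hT⟩

end PBT

open PBT in
/-- `(S¹,S²) ↦ S¹\S²` is an order isomorphism from
`[T¹,1̂] × [T²,1̂]` onto the upper interval `[T¹\T²,1̂]` in the Tamari order. -/
theorem tamari_upper_interval_graftR (T₁ T₂ : PBT) :
    Set.BijOn (fun p : PBT × PBT => graftR p.1 p.2)
      ({S | tamari T₁ S} ×ˢ {S | tamari T₂ S}) {U | tamari (graftR T₁ T₂) U} ∧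
    ∀ S₁ S₂ S₁' S₂' : PBT, tamari T₁ S₁ → tamari T₂ S₂ → tamari T₁ S₁' → tamari T₂ S₂' →
      (tamari (graftR S₁ S₂) (graftR S₁' S₂') ↔ (tamari S₁ S₁' ∧ tamari S₂ S₂')) := by
  refine ⟨⟨?mapsTo, ?injOn, ?surjOn⟩, ?order⟩
  case mapsTo => exact fun p hp => tamari_graftR hp.1 hp.2
  case injOn =>
    rintro ⟨S₁, S₂⟩ ⟨h₁, -⟩ ⟨S₁', S₂'⟩ ⟨h₁', -⟩ h
    obtain ⟨rfl, rfl⟩ := graftR_inj_of_deg_eq (h₁.deg_eq.symm.trans h₁'.deg_eq) h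
    rfl
  case surjOn =>
    intro U hU
    obtain ⟨S₁, S₂, rfl, h₁, h₂⟩ := exists_of_tamari_graftR hU
    exact ⟨(S₁, S₂), ⟨h₁, h₂⟩, rfl⟩
  case order =>
    exact fun S₁ S₂ S₁' S₂' h₁ _ h₁' _ => tamari_graftR_iff (h₁.deg_eq.symm.trans h₁'.deg_eq)
end

section
/- The associative product * on the free vector space on planar binary trees, defined by | * T = T * | = T and (T¹ ∨ T²) * (T³ ∨ T⁴) = ((T¹ ∨ T²) * T³) ∨ T⁴ + T¹ ∨ (T² * (T³ ∨ T⁴)), is well-defined and associative. -/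
namespace Finsupp

variable {R α β M : Type*} [CommSemiring R] [AddCommMonoid M] [Module R M]

theorem lhom_ext_single_one {f g : (α →₀ R) →ₗ[R] M}
    (h : ∀ x, f (single x 1) = g (single x 1)) : f = g :=
  (lift M R α).symm.injective (funext h)

theorem lhom_ext₂_single_one {B C : (α →₀ R) →ₗ[R] (β →₀ R) →ₗ[R] M}
    (h : ∀ x y, B (single x 1) (single y 1) = C (single x 1) (single y 1)) : B = C :=
  lhom_ext_single_one fun x => lhom_ext_single_one (h x)

variable (R) in
noncomputable def lift₂ (f : α → β → M) : (α →₀ R) →ₗ[R] (β →₀ R) →ₗ[R] M :=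
  lift _ R α fun x => lift M R β (f x)

@[simp]
theorem lift₂_single_one (f : α → β → M) (x : α) (y : β) :
    lift₂ R f (single x 1) (single y 1) = f x y := by
  simp [lift₂]

end Finsupp

namespace PBT

open Finsupp

noncomputable section

variable {R : Type*} [CommSemiring R]

section

variable (R)

def joinLeft (a : PBT) : (PBT →₀ R) →ₗ[R] PBT →₀ R := lmapDomain R R (node a)

def joinRight (d : PBT) : (PBT →₀ R) →ₗ[R] PBT →₀ R := lmapDomain R R (node · d)

def join : (PBT →₀ R) →ₗ[R] (PBT →₀ R) →ₗ[R] PBT →₀ R :=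
  lift₂ R fun t u => single (node t u) 1

def mulTree : PBT → PBT → PBT →₀ R
  | leaf, y => single y 1
  | node a b, leaf => single (node a b) 1
  | node a b, node c d =>
      joinRight R d (mulTree (node a b) c) + joinLeft R a (mulTree b (node c d))
  termination_by x y => x.deg + y.deg
  decreasing_by all_goals simp only [deg]; omega

def mul : (PBT →₀ R) →ₗ[R] (PBT →₀ R) →ₗ[R] PBT →₀ R := lift₂ R (mulTree R)

/-- The left half product `x ≺ y`. -/
def prec : (PBT →₀ R) →ₗ[R] (PBT →₀ R) →ₗ[R] PBT →₀ R := lift₂ R fun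
  | leaf, _ => 0
  | node a b, y => joinLeft R a (mulTree R b y)

/-- The right half product `x ≻ y`. -/
def succ : (PBT →₀ R) →ₗ[R] (PBT →₀ R) →ₗ[R] PBT →₀ R := lift₂ R fun
  | _, leaf => 0
  | x, node c d => joinRight R d (mulTree R x c)

end

@[simp]
theorem joinLeft_single (a t : PBT) : joinLeft R a (single t 1) = single (node a t) 1 :=
  mapDomain_single

@[simp]
theorem joinRight_single (d t : PBT) : joinRight R d (single t 1) = single (node t d) 1 :=
  mapDomain_single

theorem join_single_left (t : PBT) (w : PBT →₀ R) : join R (single t 1) w = joinLeft R t w :=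
  LinearMap.congr_fun (lhom_ext_single_one fun u => by simp [join]) w

theorem join_single_right (u : PBT →₀ R) (t : PBT) : join R u (single t 1) = joinRight R t u :=
  LinearMap.congr_fun (lhom_ext_single_one (f := (join R).flip (single t 1)) fun v => by
    simp [join]) u

theorem mul_single_single (x y : PBT) : mul R (single x 1) (single y 1) = mulTree R x y :=
  lift₂_single_one _ x y

theorem single_leaf_mul (w : PBT →₀ R) : mul R (single leaf 1) w = w :=
  LinearMap.congr_fun (g := LinearMap.id) (lhom_ext_single_one fun y => by
    rw [mul_single_single, mulTree, LinearMap.id_apply]) w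

theorem mul_single_leaf (v : PBT →₀ R) : mul R v (single leaf 1) = v :=
  LinearMap.congr_fun (f := (mul R).flip (single leaf 1)) (g := LinearMap.id)
    (lhom_ext_single_one fun x => by
      cases x <;> rw [LinearMap.flip_apply, mul_single_single, mulTree, LinearMap.id_apply]) v

theorem single_node_mul_single_node (a b c d : PBT) :
    mul R (single (node a b) 1) (single (node c d) 1) =
      joinRight R d (mul R (single (node a b) 1) (single c 1)) +
        joinLeft R a (mul R (single b 1) (single (node c d) 1)) := by
  simp only [mul_single_single]
  rw [mulTree]

theorem single_leaf_prec (w : PBT →₀ R) : prec R (single leaf 1) w = 0 :=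
  LinearMap.congr_fun (g := 0) (lhom_ext_single_one fun y => by simp [prec]) w

theorem single_node_prec (a b : PBT) (w : PBT →₀ R) :
    prec R (single (node a b) 1) w = joinLeft R a (mul R (single b 1) w) :=
  LinearMap.congr_fun (g := joinLeft R a ∘ₗ mul R (single b 1))
    (lhom_ext_single_one fun y => by simp [prec, mul_single_single]) w

theorem succ_single_leaf (v : PBT →₀ R) : succ R v (single leaf 1) = 0 :=
  LinearMap.congr_fun (f := (succ R).flip (single leaf 1)) (g := 0)
    (lhom_ext_single_one fun x => by simp [succ]) v

theorem succ_single_node (v : PBT →₀ R) (c d : PBT) :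
    succ R v (single (node c d) 1) = joinRight R d (mul R v (single c 1)) :=
  LinearMap.congr_fun (f := (succ R).flip (single (node c d) 1))
    (g := joinRight R d ∘ₗ (mul R).flip (single c 1))
    (lhom_ext_single_one fun x => by simp [succ, mul_single_single]) v

theorem single_node_mul (a b : PBT) (w : PBT →₀ R) :
    mul R (single (node a b) 1) w =
      prec R (single (node a b) 1) w + succ R (single (node a b) 1) w :=
  LinearMap.congr_fun (g := prec R (single (node a b) 1) + succ R (single (node a b) 1))
    (lhom_ext_single_one fun y => by
      cases y with
      | leaf => simp [mul_single_leaf, single_node_prec, succ_single_leaf]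
      | node c d =>
        rw [LinearMap.add_apply, single_node_mul_single_node, single_node_prec, succ_single_node,
          add_comm]) w

theorem mul_single_node (v : PBT →₀ R) (c d : PBT) :
    mul R v (single (node c d) 1) =
      prec R v (single (node c d) 1) + succ R v (single (node c d) 1) :=
  LinearMap.congr_fun (f := (mul R).flip (single (node c d) 1))
    (g := (prec R).flip (single (node c d) 1) + (succ R).flip (single (node c d) 1))
    (lhom_ext_single_one fun x => by
      cases x with
      | leaf => simp [single_leaf_mul, single_leaf_prec, succ_single_node]
      | node a b =>
        simp only [LinearMap.add_apply, LinearMap.flip_apply]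
        rw [single_node_mul_single_node, single_node_prec, succ_single_node, add_comm]) v

theorem prec_joinLeft (a : PBT) (u w : PBT →₀ R) :
    prec R (joinLeft R a u) w = joinLeft R a (mul R u w) :=
  LinearMap.congr_fun₂ (f := prec R ∘ₗ joinLeft R a) (g := (mul R).compr₂ (joinLeft R a))
    (lhom_ext₂_single_one fun t y => by simp [single_node_prec]) u w

theorem succ_joinRight (d : PBT) (v u : PBT →₀ R) :
    succ R v (joinRight R d u) = joinRight R d (mul R v u) :=
  LinearMap.congr_fun₂ (f := (succ R).compl₂ (joinRight R d))
    (g := (mul R).compr₂ (joinRight R d))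
    (lhom_ext₂_single_one fun x t => by simp [succ_single_node]) v u

theorem prec_joinRight (d : PBT) (u w : PBT →₀ R) :
    prec R (joinRight R d u) w = join R u (mul R (single d 1) w) :=
  LinearMap.congr_fun₂ (f := prec R ∘ₗ joinRight R d) (g := (join R).compl₂ (mul R (single d 1)))
    (lhom_ext₂_single_one fun t y => by simp [single_node_prec, join_single_left]) u w

theorem succ_joinLeft (c : PBT) (v w : PBT →₀ R) :
    succ R v (joinLeft R c w) = join R (mul R v (single c 1)) w :=
  LinearMap.congr_fun₂ (f := (succ R).compl₂ (joinLeft R c))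
    (g := join R ∘ₗ (mul R).flip (single c 1))
    (lhom_ext₂_single_one fun x t => by simp [succ_single_node, join_single_right]) v w

theorem prec_succ (u v w : PBT →₀ R) : prec R (succ R u v) w = succ R u (prec R v w) :=
  LinearMap.congr_fun₂ (f := (succ R).compr₂ ((prec R).flip w))
    (g := (succ R).compl₂ ((prec R).flip w))
    (lhom_ext₂_single_one fun x y => by
      cases y with
      | leaf => simp [succ_single_leaf, single_leaf_prec]
      | node c d => simp [succ_single_node, prec_joinRight, single_node_prec, succ_joinLeft]) u v

theorem prec_prec_of_mul_assoc (a b : PBT) (v w : PBT →₀ R)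
    (h : mul R (mul R (single b 1) v) w = mul R (single b 1) (mul R v w)) :
    prec R (prec R (single (node a b) 1) v) w = prec R (single (node a b) 1) (mul R v w) := by
  rw [single_node_prec, prec_joinLeft, h, single_node_prec]

theorem succ_mul_of_mul_assoc (u v : PBT →₀ R) (e f : PBT)
    (h : mul R (mul R u v) (single e 1) = mul R u (mul R v (single e 1))) :
    succ R (mul R u v) (single (node e f) 1) = succ R u (succ R v (single (node e f) 1)) := by
  rw [succ_single_node, h, succ_single_node, succ_joinRight]

theorem mul_assoc_single (x y z : PBT) :
    mul R (mul R (single x 1) (single y 1)) (single z 1) =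
      mul R (single x 1) (mul R (single y 1) (single z 1)) :=
  match x, y, z with
  | leaf, _, _ => by rw [single_leaf_mul, single_leaf_mul]
  | _, leaf, _ => by rw [mul_single_leaf, single_leaf_mul]
  | _, _, leaf => by rw [mul_single_leaf, mul_single_leaf]
  | node a b, node c d, node e f => by
    set x : PBT →₀ R := single (node a b) 1
    set y : PBT →₀ R := single (node c d) 1
    set z : PBT →₀ R := single (node e f) 1
    calc mul R (mul R x y) z
        = prec R (prec R x y) z + prec R (succ R x y) z + succ R (mul R x y) z := by
          rw [mul_single_node, single_node_mul a b, map_add, LinearMap.add_apply]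
      _ = prec R x (mul R y z) + (succ R x (prec R y z) + succ R x (succ R y z)) := by
          rw [prec_prec_of_mul_assoc a b _ _ (mul_assoc_single b _ _), prec_succ,
            succ_mul_of_mul_assoc _ _ e f (mul_assoc_single _ _ e), add_assoc]
      _ = mul R x (mul R y z) := by
          rw [← map_add, ← single_node_mul c d, ← single_node_mul a b]
  termination_by x.deg + y.deg + z.deg
  decreasing_by all_goals simp only [deg]; omega

theorem mul_assoc (u v w : PBT →₀ R) : mul R (mul R u v) w = mul R u (mul R v w) :=
  LinearMap.congr_fun₂ (f := (mul R).compr₂ ((mul R).flip w)) (g := (mul R).compl₂ ((mul R).flip w))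
    (lhom_ext₂_single_one fun x y =>
      LinearMap.congr_fun (f := mul R (mul R (single x 1) (single y 1)))
        (g := mul R (single x 1) ∘ₗ mul R (single y 1))
        (lhom_ext_single_one (mul_assoc_single x y)) w) u v

variable (R) in
def IsTreeProduct (m : (PBT →₀ R) →ₗ[R] (PBT →₀ R) →ₗ[R] PBT →₀ R) : Prop :=
  (∀ T : PBT, m (single leaf 1) (single T 1) = single T 1) ∧
    (∀ T : PBT, m (single T 1) (single leaf 1) = single T 1) ∧
    ∀ a b c d : PBT, m (single (node a b) 1) (single (node c d) 1) =
      joinRight R d (m (single (node a b) 1) (single c 1)) +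
        joinLeft R a (m (single b 1) (single (node c d) 1))

theorem isTreeProduct_mul : IsTreeProduct R (mul R) :=
  ⟨fun _ => single_leaf_mul _, fun _ => mul_single_leaf _, single_node_mul_single_node⟩

theorem IsTreeProduct.apply_single_one {m : (PBT →₀ R) →ₗ[R] (PBT →₀ R) →ₗ[R] PBT →₀ R}
    (hm : IsTreeProduct R m) : ∀ x y : PBT, m (single x 1) (single y 1) = mulTree R x y
  | leaf, _ => by rw [hm.1, mulTree]
  | node _ _, leaf => by rw [hm.2.1, mulTree]
  | node a b, node c d => by
    rw [hm.2.2, mulTree, hm.apply_single_one (node a b) c, hm.apply_single_one b (node c d)]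
  termination_by x y => x.deg + y.deg
  decreasing_by all_goals simp only [deg]; omega

theorem IsTreeProduct.eq_mul {m : (PBT →₀ R) →ₗ[R] (PBT →₀ R) →ₗ[R] PBT →₀ R}
    (hm : IsTreeProduct R m) : m = mul R :=
  lhom_ext₂_single_one fun x y => (hm.apply_single_one x y).trans (mul_single_single x y).symm

end

end PBT

open PBT in
/-- the product `*` on the free vector space on planar binary trees,
determined by `|` being a two-sided unit on basis elements and the recursion
`(T¹∨T²)*(T³∨T⁴) = ((T¹∨T²)*T³)∨T⁴ + T¹∨(T²*(T³∨T⁴))`, exists, is unique, and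
is associative. -/
theorem dendriform_product_wellDefined_assoc :
    ∃ m : (PBT →₀ ℚ) →ₗ[ℚ] (PBT →₀ ℚ) →ₗ[ℚ] (PBT →₀ ℚ),
      ((∀ T : PBT, m (Finsupp.single PBT.leaf 1) (Finsupp.single T 1) = Finsupp.single T 1) ∧
        (∀ T : PBT, m (Finsupp.single T 1) (Finsupp.single PBT.leaf 1) = Finsupp.single T 1) ∧
        (∀ T₁ T₂ T₃ T₄ : PBT,
          m (Finsupp.single (node T₁ T₂) 1) (Finsupp.single (node T₃ T₄) 1) =
            Finsupp.mapDomain (fun S => node S T₄)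
              (m (Finsupp.single (node T₁ T₂) 1) (Finsupp.single T₃ 1)) +
            Finsupp.mapDomain (fun S => node T₁ S)
              (m (Finsupp.single T₂ 1) (Finsupp.single (node T₃ T₄) 1)))) ∧
      (∀ f g h : PBT →₀ ℚ, m (m f g) h = m f (m g h)) ∧
      (∀ m' : (PBT →₀ ℚ) →ₗ[ℚ] (PBT →₀ ℚ) →ₗ[ℚ] (PBT →₀ ℚ),
        ((∀ T : PBT, m' (Finsupp.single PBT.leaf 1) (Finsupp.single T 1) = Finsupp.single T 1) ∧
          (∀ T : PBT, m' (Finsupp.single T 1) (Finsupp.single PBT.leaf 1) = Finsupp.single T 1) ∧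
          (∀ T₁ T₂ T₃ T₄ : PBT,
            m' (Finsupp.single (node T₁ T₂) 1) (Finsupp.single (node T₃ T₄) 1) =
              Finsupp.mapDomain (fun S => node S T₄)
                (m' (Finsupp.single (node T₁ T₂) 1) (Finsupp.single T₃ 1)) +
              Finsupp.mapDomain (fun S => node T₁ S)
                (m' (Finsupp.single T₂ 1) (Finsupp.single (node T₃ T₄) 1)))) → m' = m) :=
  ⟨mul ℚ, isTreeProduct_mul, PBT.mul_assoc, fun _ => IsTreeProduct.eq_mul⟩
end

section
/- With θ the Coxeter transformation of the Tamari posets as above, for all trees T¹, T² one has θ(T¹ * T²) = -θ(T¹)/θ(T²), where * is the dendriform product and / is left grafting, both extended bilinearly. -/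
open Classical in
/-- Incidence matrix of the Tamari order in degree `n`. -/
noncomputable def Lmat (n : ℕ) [Fintype (PBTdeg n)] : Matrix (PBTdeg n) (PBTdeg n) ℚ :=
  Matrix.of fun v w => if PBT.tamari v.1 w.1 then 1 else 0

/-- Coxeter transformation `θ = -L (Lᵗ)⁻¹` of the Tamari poset of degree `n`. -/
noncomputable def thetaMat (n : ℕ) [Fintype (PBTdeg n)] : Matrix (PBTdeg n) (PBTdeg n) ℚ :=
  -(Lmat n * ((Lmat n).transpose)⁻¹)

/-- Basis vector of a tree `T` in the free vector space on trees of degree `n`. -/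
def delta (n : ℕ) (T : PBT) : PBTdeg n → ℚ := fun U => if U.1 = T then 1 else 0

open Classical in
/-- Bilinear extension of the dendriform product `S * T = ∑_{S/T ≤ U ≤ S\T} U`. -/
noncomputable def dprod {n₁ n₂ : ℕ} [Fintype (PBTdeg n₁)] [Fintype (PBTdeg n₂)]
    (f : PBTdeg n₁ → ℚ) (g : PBTdeg n₂ → ℚ) : PBTdeg (n₁ + n₂) → ℚ :=
  fun U => ∑ S₁ : PBTdeg n₁, ∑ S₂ : PBTdeg n₂,
    f S₁ * g S₂ *
      (if PBT.tamari (PBT.graftL S₁.1 S₂.1) U.1 ∧ PBT.tamari U.1 (PBT.graftR S₁.1 S₂.1)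
        then 1 else 0)

open Classical in
/-- Bilinear extension of the left grafting `/`. -/
noncomputable def gprodL {n₁ n₂ : ℕ} [Fintype (PBTdeg n₁)] [Fintype (PBTdeg n₂)]
    (f : PBTdeg n₁ → ℚ) (g : PBTdeg n₂ → ℚ) : PBTdeg (n₁ + n₂) → ℚ :=
  fun U => ∑ S₁ : PBTdeg n₁, ∑ S₂ : PBTdeg n₂,
    f S₁ * g S₂ * (if U.1 = PBT.graftL S₁.1 S₂.1 then 1 else 0)

/-!
Write `L` for the incidence matrix of the Tamari order. Cutting a tree `U` of degree `n₁ + n₂`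
after its first `n₁` internal vertices in in-order (`PBT.split`) gives a pair `(G, H)` with
`G/H ≤ U ≤ G\H`, and the cut is monotone in `U`. Hence `S₁/S₂ ≤ U` iff `S₁ ≤ G` and `S₂ ≤ H`;
`S₁/S₂ ≤ U ≤ S₁\S₂` iff `(G, H) = (S₁, S₂)`; and every tree below a graft is a graft. In matrix
terms: `Lᵀ (x/y) = (Lᵀ x) * (Lᵀ y)` and `L (x/y) = (L x)/(L y)`. Since `L` is unitriangular
(rotations decrease a weight), the first gives `(Lᵀ)⁻¹ (x * y) = ((Lᵀ)⁻¹ x)/((Lᵀ)⁻¹ y)`, and then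
applying `-L` and the second gives `θ (x * y) = -(-θ x)/(-θ y) = -(θ x)/(θ y)`.
-/
namespace PBT

theorem deg_graftL (S T : PBT) : (graftL S T).deg = S.deg + T.deg := by
  induction T with
  | leaf => rfl
  | node l r ih => simp only [graftL, deg, ih]; omega

theorem rot.deg_eq_s17 {U V : PBT} (h : rot U V) : U.deg = V.deg := by
  induction h with
  | rotate => simp only [deg]; omega
  | left _ _ ih | right _ _ ih => simp only [deg, ih]

theorem rot.to_tamari {U V : PBT} (h : rot U V) : tamari U V := .single h

def weight : PBT → ℕ
  | leaf => 0
  | node l r => weight l + weight r + deg l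

theorem rot.weight_lt {U V : PBT} (h : rot U V) : V.weight < U.weight := by
  induction h with
  | rotate => simp only [weight, deg]; omega
  | left _ h _ => simp only [weight, h.deg_eq_s17]; omega
  | right => simp only [weight]; omega

theorem tamari.weight_le {U V : PBT} (h : tamari U V) : V.weight ≤ U.weight := by
  induction h with
  | refl => exact le_rfl
  | tail _ h ih => exact h.weight_lt.le.trans ih

theorem tamari.eq_of_weight_le {U V : PBT} (h : tamari U V) (hw : U.weight ≤ V.weight) :
    U = V := by
  rcases Relation.ReflTransGen.cases_head h with rfl | ⟨W, hUW, hWV⟩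
  · rfl
  · exact absurd ((tamari.weight_le hWV).trans_lt hUW.weight_lt) hw.not_gt

theorem tamari.antisymm {U V : PBT} (h : tamari U V) (h' : tamari V U) : U = V :=
  h.eq_of_weight_le h'.weight_le

theorem tamari.node_left {l l' : PBT} (r : PBT) (h : tamari l l') :
    tamari (node l r) (node l' r) :=
  Relation.ReflTransGen.lift (node · r) (fun _ _ => rot.left r) _ _ h

theorem tamari.node_right (l : PBT) {r r' : PBT} (h : tamari r r') :
    tamari (node l r) (node l r') :=
  Relation.ReflTransGen.lift (node l) (fun _ _ => rot.right l) _ _ h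

theorem tamari.graftL_left {S S' : PBT} (T : PBT) (h : tamari S S') :
    tamari (graftL S T) (graftL S' T) := by
  induction T with
  | leaf => exact h
  | node _ r ih => exact ih.node_left r

theorem rot.tamari_graftL (S : PBT) {T T' : PBT} (h : rot T T') :
    tamari (graftL S T) (graftL S T') := by
  induction h with
  | rotate => exact .single (rot.rotate _ _ _)
  | left _ _ ih => exact ih.node_left _
  | right _ h => exact .single (rot.right _ h)

theorem tamari.graftL_right (S : PBT) {T T' : PBT} (h : tamari T T') :
    tamari (graftL S T) (graftL S T') :=
  Relation.ReflTransGen.lift' (graftL S) (fun _ _ h => h.tamari_graftL S) _ _ h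

theorem tamari.graftL_mono {S S' T T' : PBT} (hS : tamari S S') (hT : tamari T T') :
    tamari (graftL S T) (graftL S' T') :=
  (hS.graftL_left T).trans (hT.graftL_right S')

theorem tamari_node_graftR (S T r : PBT) : tamari (node (graftR S T) r) (graftR S (node T r)) := by
  induction S with
  | leaf => exact .refl
  | node a _ _ ih => exact .head (rot.rotate _ _ _) (ih.node_right a)

theorem tamari_graftL_node (l S T : PBT) : tamari (graftL (node l S) T) (node l (graftL S T)) := by
  induction T with
  | leaf => exact .refl
  | node _ r ih _ => exact (ih.node_left r).tail (rot.rotate _ _ _)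

def split : PBT → ℕ → PBT × PBT
  | leaf, _ => (leaf, leaf)
  | node l r, k =>
    if k ≤ deg l then ((split l k).1, node (split l k).2 r)
    else (node l (split r (k - deg l - 1)).1, (split r (k - deg l - 1)).2)

theorem split_deg (U : PBT) : split U U.deg = (U, leaf) := by
  induction U with
  | leaf => rfl
  | node l r _ ih =>
    have h : ¬ deg (node l r) ≤ deg l := by simp only [deg]; omega
    have h' : deg (node l r) - deg l - 1 = deg r := by simp only [deg]; omega
    simp only [split, if_neg h, h', ih]

theorem split_zero (U : PBT) : split U 0 = (leaf, U) := by
  induction U with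
  | leaf => rfl
  | node l r ih _ => simp [split, ih]

theorem split_graftL (S T : PBT) : split (graftL S T) S.deg = (S, T) := by
  induction T with
  | leaf => exact split_deg S
  | node l r ih _ =>
    have h : S.deg ≤ deg (graftL S l) := by rw [deg_graftL]; omega
    simp [graftL, split, h, ih]

theorem split_graftR (S T : PBT) : split (graftR S T) S.deg = (S, T) := by
  induction S with
  | leaf => exact split_zero T
  | node l r _ ih =>
    have h : ¬ deg (node l r) ≤ deg l := by simp only [deg]; omega
    have h' : deg (node l r) - deg l - 1 = deg r := by simp only [deg]; omega
    simp only [graftR, split, if_neg h, h', ih]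

theorem deg_split {U : PBT} {k : ℕ} (hk : k ≤ U.deg) :
    (split U k).1.deg = k ∧ (split U k).2.deg = U.deg - k := by
  induction U generalizing k with
  | leaf => simp only [deg, Nat.le_zero] at hk; subst hk; simp [split, deg]
  | node l r ihl ihr =>
    by_cases h : k ≤ deg l
    · obtain ⟨h₁, h₂⟩ := ihl h
      simp only [split, if_pos h, deg, h₁, h₂, true_and]
      omega
    · have hk' : k - deg l - 1 ≤ deg r := by simp only [deg] at hk; omega
      obtain ⟨h₁, h₂⟩ := ihr hk'
      simp only [split, if_neg h, deg, h₁, h₂]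
      omega

theorem tamari_graftL_split {U : PBT} {k : ℕ} (hk : k ≤ U.deg) :
    tamari (graftL (split U k).1 (split U k).2) U := by
  induction U generalizing k with
  | leaf => simp only [deg, Nat.le_zero] at hk; subst hk; exact .refl
  | node l r ihl ihr =>
    by_cases h : k ≤ deg l
    · simpa only [split, if_pos h, graftL] using (ihl h).node_left r
    · have hk' : k - deg l - 1 ≤ deg r := by simp only [deg] at hk; omega
      simp only [split, if_neg h]
      exact (tamari_graftL_node l _ _).trans ((ihr hk').node_right l)

theorem tamari_graftR_split {U : PBT} {k : ℕ} (hk : k ≤ U.deg) :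
    tamari U (graftR (split U k).1 (split U k).2) := by
  induction U generalizing k with
  | leaf => simp only [deg, Nat.le_zero] at hk; subst hk; exact .refl
  | node l r ihl ihr =>
    by_cases h : k ≤ deg l
    · simp only [split, if_pos h]
      exact ((ihl h).node_left r).trans (tamari_node_graftR _ _ _)
    · have hk' : k - deg l - 1 ≤ deg r := by simp only [deg] at hk; omega
      simpa only [split, if_neg h, graftR] using (ihr hk').node_right l

theorem rot.tamari_split {U V : PBT} (h : rot U V) (k : ℕ) :
    tamari (split U k).1 (split V k).1 ∧ tamari (split U k).2 (split V k).2 := by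
  induction h generalizing k with
  | rotate A B C =>
    by_cases hA : k ≤ A.deg
    · have hAB : k ≤ (node A B).deg := by simp only [deg]; omega
      simp only [split, if_pos hAB, if_pos hA]
      exact ⟨.refl, .single (rot.rotate _ _ _)⟩
    by_cases hB : k - A.deg - 1 ≤ B.deg
    · have hAB : k ≤ (node A B).deg := by simp only [deg]; omega
      simp only [split, if_pos hAB, if_neg hA, if_pos hB]
      exact ⟨.refl, .refl⟩
    · have hAB : ¬ k ≤ (node A B).deg := by simp only [deg]; omega
      have hk : k - (node A B).deg - 1 = k - A.deg - 1 - B.deg - 1 := by simp only [deg]; omega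
      simp only [split, if_neg hAB, if_neg hA, if_neg hB, hk]
      exact ⟨.single (rot.rotate _ _ _), .refl⟩
  | @left S S' T h ih =>
    have hdeg := h.deg_eq_s17
    by_cases hS : k ≤ S.deg
    · simp only [split, if_pos hS, if_pos (hdeg ▸ hS)]
      exact ⟨(ih k).1, (ih k).2.node_left T⟩
    · simp only [split, hdeg, if_neg (hdeg ▸ hS)]
      exact ⟨h.to_tamari.node_left _, .refl⟩
  | right S h ih =>
    by_cases hS : k ≤ S.deg
    · simp only [split, if_pos hS]
      exact ⟨.refl, h.to_tamari.node_right _⟩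
    · simp only [split, if_neg hS]
      exact ⟨(ih _).1.node_right S, (ih _).2⟩

theorem tamari.tamari_split {U V : PBT} (h : tamari U V) (k : ℕ) :
    tamari (split U k).1 (split V k).1 ∧ tamari (split U k).2 (split V k).2 := by
  induction h with
  | refl => exact ⟨.refl, .refl⟩
  | tail _ h ih => exact ⟨ih.1.trans (h.tamari_split k).1, ih.2.trans (h.tamari_split k).2⟩

theorem rot.exists_graftL {S T U : PBT} (h : rot U (graftL S T)) :
    ∃ S' T', U = graftL S' T' ∧ S'.deg = S.deg := by
  induction T generalizing U with
  | leaf => exact ⟨U, leaf, rfl, h.deg_eq_s17⟩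
  | node l r ih _ =>
    rw [graftL] at h
    generalize hX : graftL S l = X at h
    cases h with
    | rotate _ B C => exact ⟨S, node (node l B) C, by simp [graftL, hX], rfl⟩
    | left _ h =>
      obtain ⟨S', l', rfl, hS'⟩ := ih (hX ▸ h)
      exact ⟨S', node l' r, rfl, hS'⟩
    | @right _ T _ h => exact ⟨S, node l T, by simp [graftL, hX], rfl⟩

theorem tamari.exists_graftL {S T U : PBT} (h : tamari U (graftL S T)) :
    ∃ S' T', U = graftL S' T' ∧ S'.deg = S.deg := by
  induction h using Relation.ReflTransGen.head_induction_on with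
  | refl => exact ⟨S, T, rfl, rfl⟩
  | head h _ ih =>
    obtain ⟨S', T', rfl, hS'⟩ := ih
    obtain ⟨S'', T'', rfl, hS''⟩ := h.exists_graftL
    exact ⟨S'', T'', rfl, hS''.trans hS'⟩

theorem graftL_tamari_iff {S T U : PBT} {k : ℕ} (hS : S.deg = k) (hk : k ≤ U.deg) :
    tamari (graftL S T) U ↔ tamari S (split U k).1 ∧ tamari T (split U k).2 := by
  subst hS
  refine ⟨fun h => ?_, fun h => (h.1.graftL_mono h.2).trans (tamari_graftL_split hk)⟩
  simpa only [split_graftL] using h.tamari_split S.deg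

theorem graftL_tamari_graftL_iff {S T S' T' : PBT} (hS : S.deg = S'.deg) :
    tamari (graftL S T) (graftL S' T') ↔ tamari S S' ∧ tamari T T' := by
  refine ⟨fun h => ?_, fun h => h.1.graftL_mono h.2⟩
  have := h.tamari_split S.deg
  rwa [split_graftL, hS, split_graftL] at this

theorem graftL_tamari_and_tamari_graftR_iff {S T U : PBT} {k : ℕ} (hS : S.deg = k)
    (hk : k ≤ U.deg) : tamari (graftL S T) U ∧ tamari U (graftR S T) ↔ split U k = (S, T) := by
  refine ⟨fun ⟨h₁, h₂⟩ => ?_, fun h => ?_⟩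
  · have hlow := (graftL_tamari_iff hS hk).1 h₁
    have hup := h₂.tamari_split k
    rw [← hS, split_graftR, hS] at hup
    exact Prod.ext (hup.1.antisymm hlow.1) (hup.2.antisymm hlow.2)
  · constructor
    · simpa only [h] using tamari_graftL_split hk
    · simpa only [h] using tamari_graftR_split hk

end PBT

namespace PBTdeg

open PBT (tamari)

variable {n₁ n₂ : ℕ}

def graftL (S : PBTdeg n₁) (T : PBTdeg n₂) : PBTdeg (n₁ + n₂) :=
  ⟨S.1.graftL T.1, by rw [PBT.deg_graftL, S.2, T.2]⟩

theorem val_eq_graftL_iff {U : PBTdeg (n₁ + n₂)} {S : PBTdeg n₁} {T : PBTdeg n₂} :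
    U.1 = S.1.graftL T.1 ↔ U = graftL S T :=
  ⟨fun h => Subtype.ext h, fun h => h ▸ rfl⟩

theorem le_deg (U : PBTdeg (n₁ + n₂)) : n₁ ≤ U.1.deg := by rw [U.2]; omega

def split (U : PBTdeg (n₁ + n₂)) : PBTdeg n₁ × PBTdeg n₂ :=
  (⟨(U.1.split n₁).1, (PBT.deg_split U.le_deg).1⟩,
    ⟨(U.1.split n₁).2, by rw [(PBT.deg_split U.le_deg).2, U.2]; omega⟩)

theorem split_eq_iff {U : PBTdeg (n₁ + n₂)} {S : PBTdeg n₁} {T : PBTdeg n₂} :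
    split U = (S, T) ↔ U.1.split n₁ = (S.1, T.1) := by
  simp only [split, Prod.ext_iff, Subtype.ext_iff]

theorem split_graftL (S : PBTdeg n₁) (T : PBTdeg n₂) : split (graftL S T) = (S, T) := by
  rw [split_eq_iff]
  have h := PBT.split_graftL S.1 T.1
  rw [S.2] at h
  exact h

theorem graftL_inj {S S' : PBTdeg n₁} {T T' : PBTdeg n₂} :
    graftL S T = graftL S' T' ↔ S = S' ∧ T = T' := by
  refine ⟨fun h => ?_, fun h => h.1 ▸ h.2 ▸ rfl⟩
  simpa only [split_graftL, Prod.mk.injEq] using congrArg split h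

theorem graftL_tamari_iff (S : PBTdeg n₁) (T : PBTdeg n₂) (U : PBTdeg (n₁ + n₂)) :
    tamari (graftL S T).1 U.1 ↔ tamari S.1 (split U).1.1 ∧ tamari T.1 (split U).2.1 :=
  PBT.graftL_tamari_iff S.2 U.le_deg

theorem graftL_tamari_graftL_iff (S S' : PBTdeg n₁) (T T' : PBTdeg n₂) :
    tamari (graftL S T).1 (graftL S' T').1 ↔ tamari S.1 S'.1 ∧ tamari T.1 T'.1 :=
  PBT.graftL_tamari_graftL_iff (S.2.trans S'.2.symm)

theorem graftL_tamari_and_tamari_graftR_iff (S : PBTdeg n₁) (T : PBTdeg n₂)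
    (U : PBTdeg (n₁ + n₂)) :
    tamari (S.1.graftL T.1) U.1 ∧ tamari U.1 (S.1.graftR T.1) ↔ split U = (S, T) := by
  rw [split_eq_iff]
  exact PBT.graftL_tamari_and_tamari_graftR_iff S.2 U.le_deg

theorem exists_graftL_of_tamari {S : PBTdeg n₁} {T : PBTdeg n₂} {U : PBTdeg (n₁ + n₂)}
    (h : tamari U.1 (graftL S T).1) : ∃ S' T', U = graftL S' T' := by
  obtain ⟨S', T', hU, hS'⟩ := PBT.tamari.exists_graftL h
  have hT' : T'.deg = n₂ := by
    have := U.2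
    rw [hU, PBT.deg_graftL, hS', S.2] at this
    omega
  exact ⟨⟨S', hS'.trans S.2⟩, ⟨T', hT'⟩, Subtype.ext hU⟩

end PBTdeg

section Incidence

open Matrix

variable (n : ℕ) [Fintype (PBTdeg n)]

open Classical in
theorem Lmat_apply (U V : PBTdeg n) : Lmat n U V = if PBT.tamari U.1 V.1 then 1 else 0 := rfl

theorem Lmat_blockTriangular :
    (Lmat n).BlockTriangular fun U => OrderDual.toDual U.1.weight := fun U V hVU => by
  rw [Lmat_apply, if_neg]
  exact fun h => h.weight_le.not_gt (OrderDual.toDual_lt_toDual.1 hVU)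

theorem det_Lmat : (Lmat n).det = 1 := by
  rw [(Lmat_blockTriangular n).det]
  refine Finset.prod_eq_one fun a _ => ?_
  suffices (Lmat n).toSquareBlock (fun U => OrderDual.toDual U.1.weight) a = 1 by
    rw [this, det_one]
  ext ⟨U, hU⟩ ⟨V, hV⟩
  have hw : U.1.weight = V.1.weight := OrderDual.toDual.injective (hU.trans hV.symm)
  rw [toSquareBlock_def, of_apply, Lmat_apply, one_apply]
  by_cases h : U = V
  · subst h
    rw [if_pos .refl, if_pos rfl]
  · rw [if_neg fun hUV => h (Subtype.ext (hUV.eq_of_weight_le hw.le)), if_neg]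
    exact fun h' => h (congrArg Subtype.val h')

theorem isUnit_det_Lmat_transpose : IsUnit (Lmat n)ᵀ.det := by
  simp [det_Lmat]

theorem Lmat_transpose_mulVec_inv_mulVec (v : PBTdeg n → ℚ) :
    (Lmat n)ᵀ *ᵥ ((Lmat n)ᵀ⁻¹ *ᵥ v) = v := by
  rw [mulVec_mulVec, mul_nonsing_inv _ (isUnit_det_Lmat_transpose n), one_mulVec]

theorem inv_mulVec_Lmat_transpose_mulVec (v : PBTdeg n → ℚ) :
    (Lmat n)ᵀ⁻¹ *ᵥ ((Lmat n)ᵀ *ᵥ v) = v := by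
  rw [mulVec_mulVec, nonsing_inv_mul _ (isUnit_det_Lmat_transpose n), one_mulVec]

end Incidence

theorem sum_sum_boole_and_mul {α β R : Type*} [Fintype α] [Fintype β] [CommSemiring R]
    (p : α → Prop) (q : β → Prop) [DecidablePred p] [DecidablePred q] (f : α → R) (g : β → R) :
    ∑ a, ∑ b, (if p a ∧ q b then 1 else 0) * (f a * g b) =
      (∑ a, (if p a then 1 else 0) * f a) * ∑ b, (if q b then 1 else 0) * g b := by
  rw [Finset.sum_mul_sum]
  refine Finset.sum_congr rfl fun a _ => Finset.sum_congr rfl fun b _ => ?_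
  rw [mul_mul_mul_comm, ite_zero_mul_ite_zero, mul_one]

section Products

open Matrix PBTdeg

variable {n₁ n₂ : ℕ} [Fintype (PBTdeg n₁)] [Fintype (PBTdeg n₂)]

theorem mulVec_gprodL_apply [Fintype (PBTdeg (n₁ + n₂))]
    (M : Matrix (PBTdeg (n₁ + n₂)) (PBTdeg (n₁ + n₂)) ℚ)
    (f : PBTdeg n₁ → ℚ) (g : PBTdeg n₂ → ℚ) (U : PBTdeg (n₁ + n₂)) :
    (M *ᵥ gprodL f g) U = ∑ S, ∑ T, M U (graftL S T) * (f S * g T) := by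
  simp only [mulVec, dotProduct, gprodL, val_eq_graftL_iff, Finset.mul_sum]
  rw [Finset.sum_comm]
  refine Finset.sum_congr rfl fun S _ => ?_
  rw [Finset.sum_comm]
  simp

theorem gprodL_graftL (f : PBTdeg n₁ → ℚ) (g : PBTdeg n₂ → ℚ) (S : PBTdeg n₁) (T : PBTdeg n₂) :
    gprodL f g (graftL S T) = f S * g T := by
  simp only [gprodL, val_eq_graftL_iff, graftL_inj, ← Prod.mk.injEq]
  rw [← Fintype.sum_prod_type']
  simp

theorem gprodL_eq_zero (f : PBTdeg n₁ → ℚ) (g : PBTdeg n₂ → ℚ) {U : PBTdeg (n₁ + n₂)}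
    (hU : ∀ S T, U ≠ graftL S T) : gprodL f g U = 0 :=
  Finset.sum_eq_zero fun S _ => Finset.sum_eq_zero fun T _ => by
    rw [if_neg (val_eq_graftL_iff.not.2 (hU S T)), mul_zero]

theorem dprod_apply (f : PBTdeg n₁ → ℚ) (g : PBTdeg n₂ → ℚ) (U : PBTdeg (n₁ + n₂)) :
    dprod f g U = f (split U).1 * g (split U).2 := by
  simp only [dprod, graftL_tamari_and_tamari_graftR_iff]
  rw [← Fintype.sum_prod_type']
  simp

theorem gprodL_neg_neg (f : PBTdeg n₁ → ℚ) (g : PBTdeg n₂ → ℚ) :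
    gprodL (-f) (-g) = gprodL f g := by
  ext U
  simp only [gprodL, Pi.neg_apply, neg_mul_neg]

end Products

section Intertwining

open Matrix PBTdeg

variable {n₁ n₂ : ℕ} [Fintype (PBTdeg n₁)] [Fintype (PBTdeg n₂)] [Fintype (PBTdeg (n₁ + n₂))]

theorem Lmat_transpose_mulVec_gprodL (f : PBTdeg n₁ → ℚ) (g : PBTdeg n₂ → ℚ) :
    (Lmat (n₁ + n₂))ᵀ *ᵥ gprodL f g = dprod ((Lmat n₁)ᵀ *ᵥ f) ((Lmat n₂)ᵀ *ᵥ g) := by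
  classical
  ext U
  rw [mulVec_gprodL_apply, dprod_apply]
  simp only [transpose_apply, Lmat_apply, graftL_tamari_iff, sum_sum_boole_and_mul, mulVec,
    dotProduct]

theorem Lmat_mulVec_gprodL (f : PBTdeg n₁ → ℚ) (g : PBTdeg n₂ → ℚ) :
    Lmat (n₁ + n₂) *ᵥ gprodL f g = gprodL (Lmat n₁ *ᵥ f) (Lmat n₂ *ᵥ g) := by
  classical
  ext U
  rw [mulVec_gprodL_apply]
  by_cases hU : ∃ S T, U = graftL S T
  · obtain ⟨S, T, rfl⟩ := hU
    simp only [gprodL_graftL, Lmat_apply, graftL_tamari_graftL_iff, sum_sum_boole_and_mul,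
      mulVec, dotProduct]
  · push Not at hU
    rw [gprodL_eq_zero _ _ hU]
    refine Finset.sum_eq_zero fun S _ => Finset.sum_eq_zero fun T _ => ?_
    rw [Lmat_apply, if_neg, zero_mul]
    intro h
    obtain ⟨S', T', rfl⟩ := exists_graftL_of_tamari h
    exact hU S' T' rfl

theorem thetaMat_mulVec_dprod (f : PBTdeg n₁ → ℚ) (g : PBTdeg n₂ → ℚ) :
    thetaMat (n₁ + n₂) *ᵥ dprod f g = -gprodL (thetaMat n₁ *ᵥ f) (thetaMat n₂ *ᵥ g) := by
  have h : (Lmat (n₁ + n₂))ᵀ⁻¹ *ᵥ dprod f g = gprodL ((Lmat n₁)ᵀ⁻¹ *ᵥ f) ((Lmat n₂)ᵀ⁻¹ *ᵥ g) := by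
    conv_lhs => rw [← Lmat_transpose_mulVec_inv_mulVec n₁ f,
      ← Lmat_transpose_mulVec_inv_mulVec n₂ g, ← Lmat_transpose_mulVec_gprodL,
      inv_mulVec_Lmat_transpose_mulVec]
  simp only [thetaMat, neg_mulVec, ← mulVec_mulVec, h, Lmat_mulVec_gprodL, gprodL_neg_neg]

end Intertwining

open PBT in
theorem theta_star_general (n₁ n₂ : ℕ) [Fintype (PBTdeg n₁)] [Fintype (PBTdeg n₂)]
    [Fintype (PBTdeg (n₁ + n₂))] (T₁ T₂ : PBT) :
    (thetaMat (n₁ + n₂)).mulVec (dprod (delta n₁ T₁) (delta n₂ T₂)) =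
      -gprodL ((thetaMat n₁).mulVec (delta n₁ T₁)) ((thetaMat n₂).mulVec (delta n₂ T₂)) :=
  thetaMat_mulVec_dprod _ _

open PBT in
/-- `θ(T¹ * T²) = -θ(T¹)/θ(T²)`, where `θ` is the Coxeter
transformation, `*` the dendriform product and `/` the bilinearly extended
left grafting. -/
theorem theta_star (n₁ n₂ : ℕ) [Fintype (PBTdeg n₁)] [Fintype (PBTdeg n₂)]
    [Fintype (PBTdeg (n₁ + n₂))] (T₁ T₂ : PBT) (h₁ : T₁.deg = n₁) (h₂ : T₂.deg = n₂) :
    (thetaMat (n₁ + n₂)).mulVec (dprod (delta n₁ T₁) (delta n₂ T₂)) =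
      -gprodL ((thetaMat n₁).mulVec (delta n₁ T₁)) ((thetaMat n₂).mulVec (delta n₂ T₂)) :=
  theta_star_general n₁ n₂ T₁ T₂
end
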